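/- arXiv:2212.14000 — 2 statements merged into one kernel-verified Lean document; each statement's English description precedes it below -/
import Mathlib

section
/- Let p be a preposet on a finite set I and let S,T be nonempty subsets with I = S ⊔ T. (a) If (S,T) ≤ p, then Σ_{i∈S} hᵢ ≤ 0 for every h ∈ σ°_p, the supremum 0 of h ↦ Σ_{i∈S} hᵢ over σ°_p is attained (e.g. at 0), and the set of maximizers is exactly σ°_p ∩ { h : Σ_{i∈S} hᵢ = 0 }. (b) If (S,T) ≰ p, then h ↦ Σ_{i∈S} hᵢ is unbounded above on σ°_p (so σ°_p has no face in the λ_{ST}-direction). -/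
/-- A preposet on `I`, identified with its set of ordered pairs of distinct related
elements: `(a, b) ∈ P` means `a ≠ b` and `a ≥_p b`. -/
def IsPreposet {I : Type*} (P : Set (I × I)) : Prop :=
  (∀ x ∈ P, x.1 ≠ x.2) ∧
    ∀ a b c : I, (a, b) ∈ P → (b, c) ∈ P → a ≠ c → (a, c) ∈ P

/-- The coroot `h_{a b} = e_a - e_b` in `ℝ^I`. -/
def corootVec {I : Type*} [DecidableEq I] (a b : I) : I → ℝ := fun i =>
  (if i = a then (1 : ℝ) else 0) - (if i = b then (1 : ℝ) else 0)

/-- The set of all finite nonnegative real linear combinations of elements of `S`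
(the conical hull, containing `0`). -/
def conicalHull {I : Type*} (S : Set (I → ℝ)) : Set (I → ℝ) :=
  {x | ∃ (n : ℕ) (c : Fin n → ℝ) (v : Fin n → I → ℝ),
    (∀ k, 0 ≤ c k) ∧ (∀ k, v k ∈ S) ∧ x = ∑ k, c k • v k}

/-- The cone `σ°_p`: the conical hull of the coroots `h_{a b}` with `(b, a) ∈ P`. -/
def sigmaCone {I : Type*} [DecidableEq I] (P : Set (I × I)) : Set (I → ℝ) :=
  conicalHull {v | ∃ a b : I, (b, a) ∈ P ∧ v = corootVec a b}

/-- `(S, T) ≤ p`: there is no pair `(t, s) ∈ P` with `t ∈ T` and `s ∈ S`. -/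
def compLe {I : Type*} (P : Set (I × I)) (S T : Finset I) : Prop :=
  ∀ t ∈ T, ∀ s ∈ S, (t, s) ∉ P


lemma sum_corootVec {I : Type*} [DecidableEq I] (S : Finset I) (a b : I) :
    ∑ i ∈ S, corootVec a b i =
      (if a ∈ S then (1 : ℝ) else 0) - (if b ∈ S then (1 : ℝ) else 0) := by
  simp [corootVec, Finset.sum_sub_distrib, Finset.sum_ite_eq']

lemma zero_mem_sigmaCone {I : Type*} [DecidableEq I] (P : Set (I × I)) :
    (0 : I → ℝ) ∈ sigmaCone P := by
  exact ⟨0, ![], ![], by simp, by simp, by simp⟩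

/-- (a) If `(S,T) ≤ p` then `h ↦ ∑_{i ∈ S} h i` is `≤ 0` on `σ°_p`, its supremum `0`
is attained, and its maximizer set is exactly `σ°_p ∩ {∑_{i ∈ S} h i = 0}`.
(b) If `(S,T) ≰ p` then `h ↦ ∑_{i ∈ S} h i` is unbounded above on `σ°_p`. -/
theorem statement5 {I : Type*} [Fintype I] [DecidableEq I]
    (P : Set (I × I)) (hP : IsPreposet P)
    (S T : Finset I) (hS : S.Nonempty) (hT : T.Nonempty)
    (hdisj : Disjoint S T) (hunion : S ∪ T = Finset.univ) :
    (compLe P S T →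
      (∀ h ∈ sigmaCone P, (∑ i ∈ S, h i) ≤ 0) ∧
      (∃ h ∈ sigmaCone P, (∑ i ∈ S, h i) = 0) ∧
      {h | h ∈ sigmaCone P ∧ ∀ h' ∈ sigmaCone P, (∑ i ∈ S, h' i) ≤ ∑ i ∈ S, h i} =
        sigmaCone P ∩ {h : I → ℝ | (∑ i ∈ S, h i) = 0}) ∧
    (¬ compLe P S T → ∀ M : ℝ, ∃ h ∈ sigmaCone P, M < ∑ i ∈ S, h i) := by
  have hzero : (0 : I → ℝ) ∈ sigmaCone P := zero_mem_sigmaCone P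
  constructor
  · intro hle
    have key : ∀ h ∈ sigmaCone P, (∑ i ∈ S, h i) ≤ 0 := by
      rintro h ⟨n, c, v, hc, hv, rfl⟩
      have : (∑ i ∈ S, ∑ k, (c k • v k) i) = ∑ k, c k * ∑ i ∈ S, v k i := by
        rw [Finset.sum_comm]
        simp [Finset.mul_sum]
      rw [show (∑ i ∈ S, (∑ k, c k • v k) i) = ∑ i ∈ S, ∑ k, (c k • v k) i by
        simp [Finset.sum_apply], this]
      apply Finset.sum_nonpos
      intro k _
      obtain ⟨a, b, hba, hvk⟩ := hv k
      have hab : (∑ i ∈ S, v k i) ≤ 0 := by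
        rw [hvk, sum_corootVec]
        by_cases ha : a ∈ S
        · have hb : b ∈ S := by
            by_contra hb
            have hbT : b ∈ T := by
              have := Finset.mem_univ b
              rw [← hunion, Finset.mem_union] at this
              tauto
            exact hle b hbT a ha hba
          simp [ha, hb]
        · by_cases hb : b ∈ S <;> simp [ha, hb]
      exact mul_nonpos_of_nonneg_of_nonpos (hc k) hab
    refine ⟨key, ⟨0, hzero, by simp⟩, ?_⟩
    ext h
    constructor
    · rintro ⟨hmem, hmax⟩
      refine ⟨hmem, le_antisymm (key h hmem) ?_⟩
      simpa using hmax 0 hzero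
    · rintro ⟨hmem, heq⟩
      exact ⟨hmem, fun h' hh' => heq ▸ key h' hh'⟩
  · intro hnle M
    simp only [compLe, not_forall, not_not] at hnle
    obtain ⟨t, ht, s, hs, hts⟩ := hnle
    set c : ℝ := |M| + 1 with hc
    have hcpos : (0 : ℝ) < c := by positivity
    refine ⟨c • corootVec s t, ⟨1, ![c], ![corootVec s t], ?_, ?_, by simp⟩, ?_⟩
    · intro k; fin_cases k; simpa using hcpos.le
    · intro k; fin_cases k; exact ⟨s, t, hts, rfl⟩
    · have hsum : ∑ i ∈ S, corootVec s t i = 1 := by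
        have htS : t ∉ S := fun h => (Finset.disjoint_left.mp hdisj h) ht
        rw [sum_corootVec]; simp [hs, htS]
      have : ∑ i ∈ S, (c • corootVec s t) i = c := by
        simp only [Pi.smul_apply, smul_eq_mul, ← Finset.mul_sum, hsum, mul_one]
      rw [this]
      calc M ≤ |M| := le_abs_self M
        _ < c := by simp [hc]
end

section
/- (F-face of a plate.) Let z be a Boolean function on a finite set I, let H = (A₁,…,A_ℓ) and F = (S₁,…,S_k) be compositions of I, and let S̄_m := S₁ ∪ … ∪ S_m be the initial segments of F. (a) If F ≤ H (equivalently, every initial segment of F is an initial segment of H), then for each 0 < m < k the supremum of h ↦ Σ_{i∈S̄_m} hᵢ over [[H]]_z equals z(S̄_m); moreover the set [[H]]_z ∩ { h : Σ_{i∈S̄_m} hᵢ = z(S̄_m) for all 0 < m < k } is nonempty and is exactly the set of points of [[H]]_z at which all the functions h ↦ Σ_{i∈S̄_m} hᵢ (0 < m < k) are simultaneously maximized (the F-face of the plate). (b) If F ≰ H, then there exists 0 < m < k such that h ↦ Σ_{i∈S̄_m} hᵢ is unbounded above on [[H]]_z, so [[H]]_z has no F-face. -/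
/-- A composition of the subset `S ⊆ I`, encoded as a block-index function `f : I → ℕ`
whose image on `S` is an initial segment of `ℕ` (blocks are the fibers of `f` in `S`,
listed in increasing order of their index; the initial segments `Ā_j` of the
composition are the sublevel sets of `f`). -/
def IsCompositionOn {I : Type*} (S : Set I) (f : I → ℕ) : Prop :=
  ∀ n m : ℕ, n ≤ m → (∃ i ∈ S, f i = m) → ∃ i ∈ S, f i = n

/-- The initial segment `Ā_j` of the composition encoded by `f`. -/
def sublevel {I : Type*} [Fintype I] (f : I → ℕ) (j : ℕ) : Finset I :=
  Finset.univ.filter (fun i => f i < j)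

/-- The plate `[[H]]_z ⊆ ℝ^I` of the composition encoded by `f` and the Boolean
function `z`. -/
def plate {I : Type*} [Fintype I] (f : I → ℕ) (z : Finset I → ℤ) : Set (I → ℝ) :=
  {h | (∑ i, h i) = (z Finset.univ : ℝ) ∧
    ∀ j : ℕ, (∑ i ∈ sublevel f j, h i) ≤ (z (sublevel f j) : ℝ)}

/-!
The plate contains the point `tightPoint f z`, which spreads `z(Ā_{j+1}) - z(Ā_j)` evenly over
the block `A_{j+1}` and so makes every constraint `∑_{Ā_j} h ≤ z(Ā_j)` an equality. Hence when
`S̄_m` is an initial segment of `H`, the bound `z(S̄_m)` is attained, and the `F`-face consists of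
the maximizers. When `S̄_m` is not an initial segment of `H`, some `a ∈ S̄_m` lies in a block no
later than that of some `b ∉ S̄_m`; moving mass `t` from `b` to `a` keeps us in the plate (every
`Ā_j` containing `a` contains `b`) and raises `∑_{S̄_m} h` by `t`.
-/

open Finset

section

variable {I : Type*}

lemma sum_add_smul_single_sub_single [DecidableEq I] (p : I → ℝ) (t : ℝ) (a b : I)
    (s : Finset I) :
    ∑ i ∈ s, (p + t • (Pi.single a 1 - Pi.single b 1) : I → ℝ) i =
      ∑ i ∈ s, p i + t * ((if a ∈ s then 1 else 0) - (if b ∈ s then 1 else 0)) := by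
  simp only [Pi.add_apply, Pi.smul_apply, Pi.sub_apply, smul_eq_mul, sum_add_distrib,
    ← mul_sum, sum_sub_distrib, sum_pi_single']

variable [Fintype I] (f : I → ℕ)

lemma sublevel_zero : sublevel f 0 = ∅ := by
  simp [sublevel]

lemma sublevel_sup_succ : sublevel f (univ.sup f + 1) = univ := by
  ext i
  simp [sublevel, le_sup (mem_univ i)]

lemma disjoint_sublevel_fiber (j : ℕ) : Disjoint (sublevel f j) (univ.filter (f · = j)) := by
  simp only [disjoint_left, sublevel, mem_filter, mem_univ, true_and]
  omega

noncomputable def tightPoint (z : Finset I → ℤ) (i : I) : ℝ :=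
  ((z (sublevel f (f i + 1)) : ℝ) - z (sublevel f (f i))) / (univ.filter (f · = f i)).card

variable {f}

lemma exists_mem_not_mem_le_of_ne_sublevel {S : Finset I} (hS : ∀ j, S ≠ sublevel f j) :
    ∃ a ∈ S, ∃ b ∉ S, f b ≤ f a := by
  by_contra! hlt
  have hne : S.Nonempty := nonempty_iff_ne_empty.2 (sublevel_zero f ▸ hS 0)
  obtain ⟨a₀, ha₀, hmax⟩ := exists_max_image S f hne
  -- `S` would be the initial segment up to the block of `a₀`
  refine hS (f a₀ + 1) (ext fun i => ?_)
  simp only [sublevel, mem_filter, mem_univ, true_and, Nat.lt_succ_iff]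
  refine ⟨hmax i, fun hi => ?_⟩
  exact of_not_not fun hiS => (hlt a₀ ha₀ i hiS).not_ge hi

variable [DecidableEq I] {z : Finset I → ℤ}

lemma sublevel_succ (j : ℕ) :
    sublevel f (j + 1) = sublevel f j ∪ univ.filter (f · = j) := by
  ext i
  simp [sublevel, le_iff_lt_or_eq]

lemma sum_fiber_tightPoint (j : ℕ) :
    ∑ i ∈ univ.filter (f · = j), tightPoint f z i =
      (z (sublevel f (j + 1)) : ℝ) - z (sublevel f j) := by
  rcases (univ.filter (f · = j)).eq_empty_or_nonempty with hempty | ⟨i₀, hi₀⟩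
  · rw [hempty, sum_empty, sublevel_succ, hempty, union_empty, sub_self]
  · have hcard : ((univ.filter (f · = j)).card : ℝ) ≠ 0 := by
      exact_mod_cast card_ne_zero_of_mem hi₀
    rw [sum_congr rfl fun i hi => by rw [tightPoint, (mem_filter.mp hi).2], sum_const,
      nsmul_eq_mul, mul_div_cancel₀ _ hcard]

lemma sum_sublevel_tightPoint (hz : z ∅ = 0) (j : ℕ) :
    ∑ i ∈ sublevel f j, tightPoint f z i = (z (sublevel f j) : ℝ) := by
  induction j with
  | zero => simp [sublevel_zero, hz]
  | succ j ih =>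
    rw [sublevel_succ, sum_union (disjoint_sublevel_fiber f j), ih, sum_fiber_tightPoint,
      ← sublevel_succ]
    ring

lemma tightPoint_mem_plate (hz : z ∅ = 0) : tightPoint f z ∈ plate f z := by
  refine ⟨?_, fun j => (sum_sublevel_tightPoint hz j).le⟩
  rw [← sublevel_sup_succ f, sum_sublevel_tightPoint hz]

lemma isGreatest_sum_sublevel (hz : z ∅ = 0) (j : ℕ) :
    IsGreatest {r : ℝ | ∃ h ∈ plate f z, r = ∑ i ∈ sublevel f j, h i} (z (sublevel f j) : ℝ) :=
  ⟨⟨tightPoint f z, tightPoint_mem_plate hz, (sum_sublevel_tightPoint hz j).symm⟩,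
    by rintro r ⟨h, hh, rfl⟩; exact hh.2 j⟩

lemma add_smul_single_sub_single_mem_plate {p : I → ℝ} (hp : p ∈ plate f z) {t : ℝ}
    (ht : 0 ≤ t) {a b : I} (hba : f b ≤ f a) :
    p + t • (Pi.single a 1 - Pi.single b 1) ∈ plate f z := by
  refine ⟨(sum_add_smul_single_sub_single p t a b univ).trans (by simp [hp.1]), fun j => ?_⟩
  have hab : a ∈ sublevel f j → b ∈ sublevel f j := by
    simp only [sublevel, mem_filter, mem_univ, true_and]
    omega
  rw [sum_add_smul_single_sub_single]
  have := hp.2 j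
  split_ifs <;> first | tauto | linarith

lemma exists_mem_plate_lt_sum {p : I → ℝ} (hp : p ∈ plate f z) {S : Finset I}
    (hS : ∀ j, S ≠ sublevel f j) (M : ℝ) : ∃ h ∈ plate f z, M < ∑ i ∈ S, h i := by
  obtain ⟨a, haS, b, hbS, hba⟩ := exists_mem_not_mem_le_of_ne_sublevel hS
  set t := max 0 (M - ∑ i ∈ S, p i) + 1
  refine ⟨p + t • (Pi.single a 1 - Pi.single b 1),
    add_smul_single_sub_single_mem_plate hp (by positivity) hba, ?_⟩
  rw [sum_add_smul_single_sub_single, if_pos haS, if_neg hbS]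
  linarith [le_max_right 0 (M - ∑ i ∈ S, p i)]

end

theorem statement16_general {I : Type*} [Fintype I]
    (z : Finset I → ℤ) (hz : z ∅ = 0)
    (f g : I → ℕ) :
    ((∀ m : ℕ, ∃ j : ℕ, sublevel g m = sublevel f j) →
      (∀ m : ℕ, (sublevel g m).Nonempty → sublevel g m ≠ Finset.univ →
        IsGreatest {r : ℝ | ∃ h ∈ plate f z, r = ∑ i ∈ sublevel g m, h i}
          (z (sublevel g m) : ℝ)) ∧
      (plate f z ∩ {h | ∀ m : ℕ, (sublevel g m).Nonempty →
          sublevel g m ≠ Finset.univ →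
          (∑ i ∈ sublevel g m, h i) = (z (sublevel g m) : ℝ)}).Nonempty ∧
      plate f z ∩ {h | ∀ m : ℕ, (sublevel g m).Nonempty →
          sublevel g m ≠ Finset.univ →
          (∑ i ∈ sublevel g m, h i) = (z (sublevel g m) : ℝ)} =
        {h | h ∈ plate f z ∧ ∀ m : ℕ, (sublevel g m).Nonempty →
          sublevel g m ≠ Finset.univ →
          ∀ h' ∈ plate f z, (∑ i ∈ sublevel g m, h' i) ≤ ∑ i ∈ sublevel g m, h i}) ∧
    (¬ (∀ m : ℕ, ∃ j : ℕ, sublevel g m = sublevel f j) →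
      ∃ m : ℕ, (sublevel g m).Nonempty ∧ sublevel g m ≠ Finset.univ ∧
        ∀ M : ℝ, ∃ h ∈ plate f z, M < ∑ i ∈ sublevel g m, h i) := by
  classical
  refine ⟨fun hFH => ?_, fun hFH => ?_⟩
  · have hmax : ∀ m, IsGreatest {r : ℝ | ∃ h ∈ plate f z, r = ∑ i ∈ sublevel g m, h i}
        (z (sublevel g m) : ℝ) := fun m => (hFH m).choose_spec ▸ isGreatest_sum_sublevel hz _
    refine ⟨fun m _ _ => hmax m,
      ⟨tightPoint f z, tightPoint_mem_plate hz, fun m _ _ => ?_⟩, Set.ext fun h => ?_⟩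
    · rw [(hFH m).choose_spec, sum_sublevel_tightPoint hz]
    · refine ⟨fun ⟨hp, heq⟩ => ⟨hp, fun m hne hnu h' hp' => ?_⟩,
        fun ⟨hp, hle⟩ => ⟨hp, fun m hne hnu => le_antisymm ((hmax m).2 ⟨h, hp, rfl⟩) ?_⟩⟩
      · exact heq m hne hnu ▸ (hmax m).2 ⟨h', hp', rfl⟩
      · obtain ⟨h', hp', hh'⟩ := (hmax m).1
        exact hh' ▸ hle m hne hnu h' hp'
  · obtain ⟨m, hm⟩ := not_forall.1 hFH
    replace hm := not_exists.1 hm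
    refine ⟨m, nonempty_iff_ne_empty.2 (sublevel_zero f ▸ hm 0),
      fun hu => hm _ (hu.trans (sublevel_sup_succ f).symm),
      exists_mem_plate_lt_sum (tightPoint_mem_plate hz) hm⟩

/-- The F-face of a plate: `f` encodes the composition `H` and `g` encodes `F`, with
initial segments `S̄_m = sublevel g m`.  (a) If every initial segment of `F` is an
initial segment of `H`, then for each proper nonempty `S̄_m` the function
`h ↦ ∑_{i ∈ S̄_m} hᵢ` has greatest value `z (S̄_m)` on `[[H]]_z`, and the set of points
of `[[H]]_z` where all these equalities hold is nonempty and is exactly the set of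
simultaneous maximizers (the F-face).  (b) Otherwise some such function is unbounded
above on `[[H]]_z`, so there is no F-face. -/
theorem statement16 {I : Type*} [Fintype I] [DecidableEq I]
    (z : Finset I → ℤ) (hz : z ∅ = 0)
    (f g : I → ℕ) (hf : IsCompositionOn Set.univ f) (hg : IsCompositionOn Set.univ g) :
    ((∀ m : ℕ, ∃ j : ℕ, sublevel g m = sublevel f j) →
      (∀ m : ℕ, (sublevel g m).Nonempty → sublevel g m ≠ Finset.univ →
        IsGreatest {r : ℝ | ∃ h ∈ plate f z, r = ∑ i ∈ sublevel g m, h i}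
          (z (sublevel g m) : ℝ)) ∧
      (plate f z ∩ {h | ∀ m : ℕ, (sublevel g m).Nonempty →
          sublevel g m ≠ Finset.univ →
          (∑ i ∈ sublevel g m, h i) = (z (sublevel g m) : ℝ)}).Nonempty ∧
      plate f z ∩ {h | ∀ m : ℕ, (sublevel g m).Nonempty →
          sublevel g m ≠ Finset.univ →
          (∑ i ∈ sublevel g m, h i) = (z (sublevel g m) : ℝ)} =
        {h | h ∈ plate f z ∧ ∀ m : ℕ, (sublevel g m).Nonempty →
          sublevel g m ≠ Finset.univ →
          ∀ h' ∈ plate f z, (∑ i ∈ sublevel g m, h' i) ≤ ∑ i ∈ sublevel g m, h i}) ∧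
    (¬ (∀ m : ℕ, ∃ j : ℕ, sublevel g m = sublevel f j) →
      ∃ m : ℕ, (sublevel g m).Nonempty ∧ sublevel g m ≠ Finset.univ ∧
        ∀ M : ℝ, ∃ h ∈ plate f z, M < ∑ i ∈ sublevel g m, h i) :=
  statement16_general z hz f g
end
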